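/- arXiv:2302.10017 — 2 statements merged into one kernel-verified Lean document; each statement's English description precedes it below -/
import Mathlib

section
/- Let n m : ℕ, Δt : ℝ, let K ⊆ (Fin n → ℝ) be a nonempty compact set, let ψ : (Fin n → ℝ) → (Fin m → ℝ) be continuous on K, φ : (Fin m → ℝ) → (Fin n → ℝ), g : (Fin m → ℝ) → (Fin m → ℝ), x_g ∈ K, y_g : Fin m → ℝ. Define F(x) = x + Δt • φ(ψ(x)) and assume F(K) ⊆ K. Assume (i) for every y the iterates g^[k](y) converge to y_g, (ii) ψ(F(x)) = g(ψ(x)) for every x ∈ K, and (iii) for every x ∈ K, ψ(x) = y_g implies x = x_g. Then ψ is injective on K: for all a b ∈ K, ψ(a) = ψ(b) implies a = b. -/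
/-!
If `ψ a = ψ b`, then `ψ` agrees along the two orbits, since both are carried to the same latent
orbit `g^[k] (ψ a)`. As the Euler step `F x = x + Δt • φ (ψ x)` moves points with equal latent
image by the same vector, the orbit of `b` is the orbit of `a` translated by `b - a`. Along a
subsequence the orbit of `a` converges in the compact set `K` to some `x`, so the orbit of `b`
converges to `x + (b - a)`. By continuity of `ψ` and convergence of the latent orbit both limits
are mapped to `y_g`, hence both equal `x_g`, and `b - a = 0`.
-/

open Filter Topology

theorem Set.MapsTo.apply_iterate_eq_iterate_apply {α β : Type*} {F : α → α} {g : β → β}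
    {ψ : α → β} {K : Set α} (hF : Set.MapsTo F K K) (h : ∀ x ∈ K, ψ (F x) = g (ψ x)) :
    ∀ k, ∀ x ∈ K, ψ (F^[k] x) = g^[k] (ψ x)
  | 0, _, _ => rfl
  | k + 1, x, hx => by
    rw [Function.iterate_succ_apply, Function.iterate_succ_apply,
      hF.apply_iterate_eq_iterate_apply h k (F x) (hF hx), h x hx]

theorem iterate_eq_iterate_add_of_forall_eq {E Y : Type*} [AddCommGroup E] {F : E → E}
    {v : Y → E} {ψ : E → Y} (hF : ∀ x, F x = x + v (ψ x)) {a b : E}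
    (h : ∀ k, ψ (F^[k] a) = ψ (F^[k] b)) (k : ℕ) : F^[k] b = F^[k] a + (b - a) := by
  induction k with
  | zero => simp
  | succ k ih =>
    rw [Function.iterate_succ_apply', Function.iterate_succ_apply', hF, hF, ← h k, ih]
    abel

theorem ContinuousOn.eq_of_tendsto_comp {X Y ι : Type*} [TopologicalSpace X]
    [TopologicalSpace Y] [T2Space Y] {ψ : X → Y} {K : Set X} (hψ : ContinuousOn ψ K)
    (hK : IsClosed K) {l : Filter ι} [l.NeBot] {u : ι → X} (hu : ∀ i, u i ∈ K) {z : X}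
    {y : Y} (huz : Tendsto u l (𝓝 z)) (hψu : Tendsto (fun i => ψ (u i)) l (𝓝 y)) :
    ψ z = y := by
  have hz : z ∈ K := hK.mem_of_tendsto huz (Eventually.of_forall hu)
  have hψz : Tendsto (fun i => ψ (u i)) l (𝓝 (ψ z)) :=
    (hψ z hz).tendsto.comp (tendsto_nhdsWithin_iff.2 ⟨huz, Eventually.of_forall hu⟩)
  exact tendsto_nhds_unique hψz hψu

theorem eq_of_tendsto_iterate_subseq {X Y : Type*} [TopologicalSpace X] [TopologicalSpace Y]
    [T2Space Y] {K : Set X} (hK : IsClosed K) {ψ : X → Y} (hψ : ContinuousOn ψ K)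
    {F : X → X} (hF : Set.MapsTo F K K) {g : Y → Y} {y_g : Y} {x_g : X}
    (hg : ∀ y, Tendsto (fun k => g^[k] y) atTop (𝓝 y_g))
    (hcond1 : ∀ x ∈ K, ψ (F x) = g (ψ x)) (hcond2 : ∀ x ∈ K, ψ x = y_g → x = x_g)
    {c z : X} (hc : c ∈ K) {σ : ℕ → ℕ} (hσ : StrictMono σ)
    (hlim : Tendsto (fun i => F^[σ i] c) atTop (𝓝 z)) : z = x_g := by
  have hmem : ∀ i, F^[σ i] c ∈ K := fun i => hF.iterate (σ i) hc
  have hψlim : Tendsto (fun i => ψ (F^[σ i] c)) atTop (𝓝 y_g) := by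
    simpa only [hF.apply_iterate_eq_iterate_apply hcond1 _ c hc, Function.comp_def] using
      (hg (ψ c)).comp hσ.tendsto_atTop
  exact hcond2 z (hK.mem_of_tendsto hlim (Eventually.of_forall hmem))
    (hψ.eq_of_tendsto_comp hK hmem hlim hψlim)

theorem stmt6_general (n m : ℕ) (Δt : ℝ) (K : Set (Fin n → ℝ))
    (hKc : IsCompact K)
    (ψ : (Fin n → ℝ) → (Fin m → ℝ)) (hψ : ContinuousOn ψ K)
    (φ : (Fin m → ℝ) → (Fin n → ℝ))
    (g : (Fin m → ℝ) → (Fin m → ℝ)) (x_g : Fin n → ℝ)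
    (y_g : Fin m → ℝ)
    (F : (Fin n → ℝ) → (Fin n → ℝ))
    (hFdef : ∀ x, F x = x + Δt • φ (ψ x))
    (hF : Set.MapsTo F K K)
    (hg : ∀ y : Fin m → ℝ, Tendsto (fun k => g^[k] y) atTop (𝓝 y_g))
    (hcond1 : ∀ x ∈ K, ψ (F x) = g (ψ x))
    (hcond2 : ∀ x ∈ K, ψ x = y_g → x = x_g) :
    ∀ a ∈ K, ∀ b ∈ K, ψ a = ψ b → a = b := by
  intro a ha b hb hab
  have hsemiconj := hF.apply_iterate_eq_iterate_apply hcond1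
  have htrans : ∀ k, F^[k] b = F^[k] a + (b - a) :=
    iterate_eq_iterate_add_of_forall_eq hFdef fun k => by
      rw [hsemiconj k a ha, hsemiconj k b hb, hab]
  obtain ⟨x, -, σ, hσ, hxa⟩ := hKc.tendsto_subseq fun k => hF.iterate k ha
  have hxb : Tendsto (fun i => F^[σ i] b) atTop (𝓝 (x + (b - a))) := by
    simpa only [htrans, Function.comp_def] using hxa.add_const (b - a)
  have hx : x = x_g :=
    eq_of_tendsto_iterate_subseq hKc.isClosed hψ hF hg hcond1 hcond2 ha hσ hxa
  have hxb' : x + (b - a) = x_g :=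
    eq_of_tendsto_iterate_subseq hKc.isClosed hψ hF hg hcond1 hcond2 hb hσ hxb
  rw [← hx, add_eq_left, sub_eq_zero] at hxb'
  exact hxb'.symm

theorem stmt6 (n m : ℕ) (Δt : ℝ) (K : Set (Fin n → ℝ)) (hKne : K.Nonempty)
    (hKc : IsCompact K)
    (ψ : (Fin n → ℝ) → (Fin m → ℝ)) (hψ : ContinuousOn ψ K)
    (φ : (Fin m → ℝ) → (Fin n → ℝ))
    (g : (Fin m → ℝ) → (Fin m → ℝ)) (x_g : Fin n → ℝ) (hxg : x_g ∈ K)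
    (y_g : Fin m → ℝ)
    (F : (Fin n → ℝ) → (Fin n → ℝ))
    (hFdef : ∀ x, F x = x + Δt • φ (ψ x))
    (hF : Set.MapsTo F K K)
    (hg : ∀ y : Fin m → ℝ, Tendsto (fun k => g^[k] y) atTop (𝓝 y_g))
    (hcond1 : ∀ x ∈ K, ψ (F x) = g (ψ x))
    (hcond2 : ∀ x ∈ K, ψ x = y_g → x = x_g) :
    ∀ a ∈ K, ∀ b ∈ K, ψ a = ψ b → a = b :=
  stmt6_general n m Δt K hKc ψ hψ φ g x_g y_g F hFdef hF hg hcond1 hcond2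
end

section
/- Let n m : ℕ, let K ⊆ (Fin n → ℝ) be a nonempty compact set, let F : (Fin n → ℝ) → (Fin n → ℝ) satisfy F(K) ⊆ K, let ψ : (Fin n → ℝ) → (Fin m → ℝ) be continuous on K, let g : (Fin m → ℝ) → (Fin m → ℝ), let x_g ∈ K and y_g : Fin m → ℝ. Assume: (i) for every y : Fin m → ℝ, the iterates g^[k](y) converge to y_g as k → ∞; (ii) g(y_g) = y_g; (iii) ψ(F(x)) = g(ψ(x)) for every x ∈ K (stability condition 1); (iv) for every x ∈ K with x ≠ x_g, ψ(F(x)) ≠ ψ(x) (the surrogate separation condition). Then for every x ∈ K, the iterates F^[k](x) converge to x_g as k → ∞. -/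
/-!
Along an orbit in `K` the semiconjugacy gives `ψ (F^[k] x) = g^[k] (ψ x) → y_g`. By continuity of
`ψ` on `K`, every cluster point `z ∈ K` of the orbit satisfies `ψ z = y_g`, so `ψ (F z) = ψ z`, and
separation forces `z = x_g`. An orbit in a compact set with a unique cluster point converges to it.
-/

open Filter Topology Set

variable {X Y α β : Type*}

lemma Set.MapsTo.iterate_semiconj_apply {F : α → α} {ψ : α → β} {g : β → β} {s : Set α}
    (hF : MapsTo F s s) (h : ∀ x ∈ s, ψ (F x) = g (ψ x)) (k : ℕ) {x : α} (hx : x ∈ s) :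
    ψ (F^[k] x) = g^[k] (ψ x) := by
  induction k with
  | zero => rfl
  | succ k ih =>
    rw [Function.iterate_succ_apply', Function.iterate_succ_apply', h _ (hF.iterate k hx), ih]

section Topology

variable [TopologicalSpace X] [TopologicalSpace Y] [T2Space Y]

lemma MapClusterPt.eq_of_tendsto_comp {l : Filter α} {u : α → X} {s : Set X} {f : X → Y}
    {x : X} {y : Y} (hx : MapClusterPt x l u) (hf : ContinuousWithinAt f s x)
    (hu : ∀ᶠ a in l, u a ∈ s) (hfu : Tendsto (f ∘ u) l (𝓝 y)) : f x = y := by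
  have hcl : MapClusterPt (f x) l (f ∘ u) :=
    hx.tendsto_comp' (hf.tendsto.mono_left (inf_le_inf_left _ (tendsto_principal.2 hu)))
  by_contra hne
  exact clusterPt_iff_not_disjoint.1 (hcl.clusterPt.mono hfu) (disjoint_nhds_nhds.2 hne)

theorem IsCompact.tendsto_nhds_of_tendsto_comp {s : Set X} (hs : IsCompact s) {f : X → Y}
    (hf : ContinuousOn f s) {l : Filter α} {u : α → X} (hu : ∀ᶠ a in l, u a ∈ s) {x₀ : X} {y : Y}
    (hfu : Tendsto (f ∘ u) l (𝓝 y)) (hfiber : ∀ x ∈ s, f x = y → x = x₀) :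
    Tendsto u l (𝓝 x₀) :=
  hs.tendsto_nhds_of_unique_mapClusterPt hu fun x hx hcl =>
    hfiber x hx (hcl.eq_of_tendsto_comp (hf x hx) hu hfu)

end Topology

theorem stmt13_general (n m : ℕ) (K : Set (Fin n → ℝ)) (hKc : IsCompact K)
    (F : (Fin n → ℝ) → (Fin n → ℝ)) (hF : Set.MapsTo F K K)
    (ψ : (Fin n → ℝ) → (Fin m → ℝ)) (hψ : ContinuousOn ψ K)
    (g : (Fin m → ℝ) → (Fin m → ℝ)) (x_g : Fin n → ℝ)
    (y_g : Fin m → ℝ)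
    (hg : ∀ y : Fin m → ℝ, Tendsto (fun k => g^[k] y) atTop (𝓝 y_g))
    (hfix : g y_g = y_g)
    (hcond1 : ∀ x ∈ K, ψ (F x) = g (ψ x))
    (hsep : ∀ x ∈ K, x ≠ x_g → ψ (F x) ≠ ψ x) :
    ∀ x ∈ K, Tendsto (fun k => F^[k] x) atTop (𝓝 x_g) := by
  have hfiber : ∀ z ∈ K, ψ z = y_g → z = x_g := fun z hz hψz => by
    by_contra hne
    exact hsep z hz hne (by rw [hcond1 z hz, hψz, hfix])
  intro x hx
  refine hKc.tendsto_nhds_of_tendsto_comp hψ (.of_forall fun k => hF.iterate k hx) ?_ hfiber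
  simpa only [Function.comp_def, hF.iterate_semiconj_apply hcond1 _ hx] using hg (ψ x)

theorem stmt13 (n m : ℕ) (K : Set (Fin n → ℝ)) (hKne : K.Nonempty) (hKc : IsCompact K)
    (F : (Fin n → ℝ) → (Fin n → ℝ)) (hF : Set.MapsTo F K K)
    (ψ : (Fin n → ℝ) → (Fin m → ℝ)) (hψ : ContinuousOn ψ K)
    (g : (Fin m → ℝ) → (Fin m → ℝ)) (x_g : Fin n → ℝ) (hxg : x_g ∈ K)
    (y_g : Fin m → ℝ)
    (hg : ∀ y : Fin m → ℝ, Tendsto (fun k => g^[k] y) atTop (𝓝 y_g))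
    (hfix : g y_g = y_g)
    (hcond1 : ∀ x ∈ K, ψ (F x) = g (ψ x))
    (hsep : ∀ x ∈ K, x ≠ x_g → ψ (F x) ≠ ψ x) :
    ∀ x ∈ K, Tendsto (fun k => F^[k] x) atTop (𝓝 x_g) :=
  stmt13_general n m K hKc F hF ψ hψ g x_g y_g hg hfix hcond1 hsep
end
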